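/- Let 𝒢 be the set of one-dimensional Gaussian wave packets, i.e. functions g : ℝ → ℂ of the form g(x) = a·exp(−((α+iβ)/2)(x−q)²)·exp(i p(x−q)) with a ∈ ℂ, p, q ∈ ℝ, α > 0, β ∈ ℝ. Then the function w(x) = −2x e^{−x²} cannot be written as the sum of two elements of 𝒢; that is, there are no g₁, g₂ ∈ 𝒢 with w = g₁ + g₂. Consequently, the set 𝒢 + 𝒢 of sums of two Gaussian wave packets is not weakly sequentially closed in L^r(ℝ) for any 1 ≤ r < ∞. -/

import Mathlib

open MeasureTheory Filter
open scoped ENNReal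

/-- One-dimensional Gaussian wave packets:
`g(x) = a·exp(−((α+iβ)/2)(x−q)²)·exp(i p(x−q))` with `a ∈ ℂ`, `p, q ∈ ℝ`, `α > 0`,
`β ∈ ℝ`. -/
def GaussianPacket1D : Set (ℝ → ℂ) :=
  {g | ∃ (a : ℂ) (p q α β : ℝ), 0 < α ∧
    ∀ x : ℝ, g x =
      a * Complex.exp (-(((α : ℂ) + Complex.I * (β : ℂ)) / 2) * ((x : ℂ) - (q : ℂ)) ^ 2) *
        Complex.exp (Complex.I * (p : ℂ) * ((x : ℂ) - (q : ℂ)))}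

/-- Sums of two one-dimensional Gaussian wave packets. -/
def TwoGaussianSums : Set (ℝ → ℂ) :=
  {f | ∃ g₁ ∈ GaussianPacket1D, ∃ g₂ ∈ GaussianPacket1D, f = g₁ + g₂}



lemma poly4_coeffs {c0 c1 c2 c3 c4 : ℂ}
    (h : ∀ x : ℝ, c4*(x:ℂ)^4 + c3*(x:ℂ)^3 + c2*(x:ℂ)^2 + c1*(x:ℂ) + c0 = 0) :
    c4 = 0 ∧ c3 = 0 ∧ c2 = 0 ∧ c1 = 0 ∧ c0 = 0 := by
  have h0 := h 0; have h1 := h 1; have h2 := h 2; have h3 := h (-1); have h4 := h (-2)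
  push_cast at h0 h1 h2 h3 h4
  refine ⟨?_, ?_, ?_, ?_, ?_⟩
  · linear_combination (h2 + h4 - 4*h1 - 4*h3 + 6*h0)/24
  · linear_combination (h2 - h4 - 2*h1 + 2*h3)/12
  · linear_combination (16*h1 + 16*h3 - h2 - h4 - 30*h0)/24
  · linear_combination (8*h1 - 8*h3 - h2 + h4)/12
  · linear_combination h0

lemma no_two_exp (A B m n s t : ℂ)
    (hyp : ∀ x : ℝ, A * Complex.exp (m*(x:ℂ)^2+n*(x:ℂ)) + B * Complex.exp (s*(x:ℂ)^2+t*(x:ℂ))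
      = -2*(x:ℂ)) : False := by
  set u : ℝ → ℂ := fun x => A * Complex.exp (m*(x:ℂ)^2+n*(x:ℂ)) with hu_def
  set v : ℝ → ℂ := fun x => B * Complex.exp (s*(x:ℂ)^2+t*(x:ℂ)) with hv_def
  have hexp : ∀ (C a b : ℂ) (x : ℝ),
      HasDerivAt (fun y : ℝ => C * Complex.exp (a*(y:ℂ)^2+b*(y:ℂ)))
        ((2*a*(x:ℂ)+b) * (C * Complex.exp (a*(x:ℂ)^2+b*(x:ℂ)))) x := by
    intro C a b x
    have hq : HasDerivAt (fun z : ℂ => a*z^2+b*z) (2*a*(x:ℂ)+b) (x:ℂ) := by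
      have := ((hasDerivAt_pow 2 (x:ℂ)).const_mul a).add ((hasDerivAt_id (x:ℂ)).const_mul b)
      exact this.congr_deriv (by ring)
    have := (hq.cexp.const_mul C)
    have h2 : HasDerivAt (fun z : ℂ => C * Complex.exp (a*z^2+b*z))
        ((2*a*(x:ℂ)+b) * (C * Complex.exp (a*(x:ℂ)^2+b*(x:ℂ)))) (x:ℂ) := by
      exact this.congr_deriv (by ring)
    exact h2.comp_ofReal
  have hu : ∀ x : ℝ, HasDerivAt u ((2*m*(x:ℂ)+n) * u x) x := fun x => hexp A m n x
  have hv : ∀ x : ℝ, HasDerivAt v ((2*s*(x:ℂ)+t) * v x) x := fun x => hexp B s t x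
  -- derivative of the identity
  have h2 : ∀ x : ℝ, (2*m*(x:ℂ)+n) * u x + (2*s*(x:ℂ)+t) * v x = -2 := by
    intro x
    have hsum : HasDerivAt (fun y : ℝ => u y + v y)
        ((2*m*(x:ℂ)+n) * u x + (2*s*(x:ℂ)+t) * v x) x := (hu x).add (hv x)
    have hfun : (fun y : ℝ => u y + v y) = fun y : ℝ => -2*(y:ℂ) := funext fun y => hyp y
    rw [hfun] at hsum
    have hlin : HasDerivAt (fun y : ℝ => -2*(y:ℂ)) (-2 : ℂ) x := by
      have := ((hasDerivAt_id ((x:ℝ):ℂ)).const_mul (-2:ℂ))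
      have h' : HasDerivAt (fun z : ℂ => -2*z) (-2:ℂ) ((x:ℝ):ℂ) := by
        exact this.congr_deriv (by ring)
      exact h'.comp_ofReal
    exact hsum.unique hlin
  have h3 : ∀ x : ℝ, (2*(m-s)*(x:ℂ)+(n-t)) * u x = 4*s*(x:ℂ)^2 + 2*t*(x:ℂ) - 2 := by
    intro x
    linear_combination (h2 x) - (2*s*(x:ℂ)+t) * (hyp x)
  have h4 : ∀ x : ℝ, (2*(m-s)) * u x + (2*(m-s)*(x:ℂ)+(n-t)) * ((2*m*(x:ℂ)+n) * u x)
      = 8*s*(x:ℂ) + 2*t := by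
    intro x
    have hL : HasDerivAt (fun y : ℝ => (2*(m-s)*(y:ℂ)+(n-t)) * u y)
        ((2*(m-s)) * u x + (2*(m-s)*(x:ℂ)+(n-t)) * ((2*m*(x:ℂ)+n) * u x)) x := by
      have hD : HasDerivAt (fun y : ℝ => 2*(m-s)*(y:ℂ)+(n-t)) (2*(m-s)) x := by
        have h' : HasDerivAt (fun z : ℂ => 2*(m-s)*z+(n-t)) (2*(m-s)) ((x:ℝ):ℂ) := by
          have := ((hasDerivAt_id ((x:ℝ):ℂ)).const_mul (2*(m-s))).add_const (n-t)
          exact this.congr_deriv (by ring)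
        exact h'.comp_ofReal
      exact hD.mul (hu x)
    have hfun : (fun y : ℝ => (2*(m-s)*(y:ℂ)+(n-t)) * u y)
        = fun y : ℝ => 4*s*(y:ℂ)^2 + 2*t*(y:ℂ) - 2 := funext fun y => h3 y
    rw [hfun] at hL
    have hR : HasDerivAt (fun y : ℝ => 4*s*(y:ℂ)^2 + 2*t*(y:ℂ) - 2) (8*s*(x:ℂ)+2*t) x := by
      have h' : HasDerivAt (fun z : ℂ => 4*s*z^2 + 2*t*z - 2) (8*s*(x:ℂ)+2*t) ((x:ℝ):ℂ) := by
        have := (((hasDerivAt_pow 2 ((x:ℝ):ℂ)).const_mul (4*s)).add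
          ((hasDerivAt_id ((x:ℝ):ℂ)).const_mul (2*t))).sub_const 2
        exact this.congr_deriv (by ring)
      exact h'.comp_ofReal
    exact hL.unique hR
  have h5 : ∀ x : ℝ, (4*s*(x:ℂ)^2 + 2*t*(x:ℂ) - 2) * (2*(m-s) + (2*(m-s)*(x:ℂ)+(n-t))*(2*m*(x:ℂ)+n))
      = (8*s*(x:ℂ) + 2*t) * (2*(m-s)*(x:ℂ)+(n-t)) := by
    intro x
    linear_combination (2*(m-s)*(x:ℂ)+(n-t)) * h4 x
      - (2*(m-s) + (2*(m-s)*(x:ℂ)+(n-t))*(2*m*(x:ℂ)+n)) * h3 x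
  have h6 : ∀ x : ℝ,
      (16*m*s*(m-s))*(x:ℂ)^4
      + (8*s*n*(m-s) + 8*s*m*(n-t) + 8*t*m*(m-s))*(x:ℂ)^3
      + (4*s*(n*(n-t)+2*(m-s)) + 2*t*(2*n*(m-s)+2*m*(n-t)) - 8*m*(m-s) - 16*s*(m-s))*(x:ℂ)^2
      + (2*t*(n*(n-t)+2*(m-s)) - 2*(2*n*(m-s)+2*m*(n-t)) - 8*s*(n-t) - 4*t*(m-s))*(x:ℂ)
      + (-2*(n*(n-t)+2*(m-s)) - 2*t*(n-t)) = 0 := by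
    intro x
    linear_combination h5 x
  obtain ⟨e4, e3, e2, e1, e0⟩ := poly4_coeffs h6
  -- now case analysis
  by_cases hd2 : m = s
  · subst hd2
    by_cases hd1 : n = t
    · subst hd1
      have h30 := h3 0
      push_cast at h30
      simp at h30
    · have hd1' : n - t ≠ 0 := sub_ne_zero.mpr hd1
      have hfac : (n+t)*(n-t) = 0 := by linear_combination (-1/2)*e0
      have hnt : n + t = 0 := by
        rcases mul_eq_zero.mp hfac with h | h
        · exact h
        · exact absurd h hd1'
      have hs2 : m^2*(n-t) = 0 := by linear_combination (1/8)*e3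
      have hm0 : m = 0 := by
        rcases mul_eq_zero.mp hs2 with h | h
        · exact pow_eq_zero_iff (n := 2) (by norm_num) |>.mp h
        · exact absurd h hd1'
      subst hm0
      have hfin : t*n*(n-t) = 0 := by linear_combination (1/2)*e1
      have ht0 : t ≠ 0 := by
        intro h; apply hd1
        have : n = 0 := by linear_combination hnt - h
        rw [this, h]
      have hn0 : n ≠ 0 := by
        intro h; apply ht0; linear_combination hnt - h
      rcases mul_eq_zero.mp hfin with h | h
      · rcases mul_eq_zero.mp h with h' | h'
        · exact ht0 h'
        · exact hn0 h'
      · exact hd1' h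
  · have hd2' : m - s ≠ 0 := sub_ne_zero.mpr hd2
    have e4' : (m*s) * (m-s) = 0 := by linear_combination (1/16)*e4
    have hms : m*s = 0 := by
      rcases mul_eq_zero.mp e4' with h | h
      · exact h
      · exact absurd h hd2'
    rcases mul_eq_zero.mp hms with hm0 | hs0
    · subst hm0
      have hs' : s ≠ 0 := fun h => hd2 (by rw [h])
      have hn : s^2*n = 0 := by linear_combination (-1/8)*e3
      have hn0 : n = 0 := by
        rcases mul_eq_zero.mp hn with h | h
        · exact absurd (pow_eq_zero_iff (n := 2) (by norm_num) |>.mp h) hs'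
        · exact h
      subst hn0
      have : s^2 = 0 := by linear_combination (1/8)*e2
      exact hs' (pow_eq_zero_iff (n := 2) (by norm_num) |>.mp this)
    · subst hs0
      have hm' : m ≠ 0 := fun h => hd2 (by rw [h])
      have ht : m^2*t = 0 := by linear_combination (1/8)*e3
      have ht0 : t = 0 := by
        rcases mul_eq_zero.mp ht with h | h
        · exact absurd (pow_eq_zero_iff (n := 2) (by norm_num) |>.mp h) hm'
        · exact h
      subst ht0
      have : m^2 = 0 := by linear_combination (-1/8)*e2
      exact hm' (pow_eq_zero_iff (n := 2) (by norm_num) |>.mp this)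

lemma packet_form {g : ℝ → ℂ} (hg : g ∈ GaussianPacket1D) :
    ∃ (A c b : ℂ), ∀ x : ℝ, g x = A * Complex.exp (c*(x:ℂ)^2 + b*(x:ℂ)) := by
  obtain ⟨a, p, q, α, β, -, hg⟩ := hg
  refine ⟨a * Complex.exp ((-(((α:ℂ)+Complex.I*(β:ℂ))/2))*(q:ℂ)^2 - Complex.I*(p:ℂ)*(q:ℂ)),
    -(((α:ℂ)+Complex.I*(β:ℂ))/2), ((α:ℂ)+Complex.I*(β:ℂ))*(q:ℂ) + Complex.I*(p:ℂ),
    fun x => ?_⟩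
  have comb : ∀ u v : ℂ, a * Complex.exp u * Complex.exp v = a * Complex.exp (u+v) :=
    fun u v => by rw [mul_assoc, ← Complex.exp_add]
  rw [hg x, comb, comb]
  congr 2
  ring


lemma part1 : (fun x : ℝ => ((-2 * x * Real.exp (-x ^ 2) : ℝ) : ℂ)) ∉ TwoGaussianSums := by
  rintro ⟨g₁, hg₁, g₂, hg₂, hsum⟩
  obtain ⟨A₁, c₁, b₁, h₁⟩ := packet_form hg₁
  obtain ⟨A₂, c₂, b₂, h₂⟩ := packet_form hg₂
  apply no_two_exp A₁ A₂ (c₁+1) b₁ (c₂+1) b₂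
  intro x
  have hx := congrFun hsum x
  simp only [Pi.add_apply, h₁ x, h₂ x] at hx
  have key : ((-2 * x * Real.exp (-x ^ 2) : ℝ) : ℂ) * Complex.exp ((x:ℂ)^2) = -2*(x:ℂ) := by
    push_cast [Complex.ofReal_exp]
    rw [mul_assoc, ← Complex.exp_add]
    simp
  have E1 : Complex.exp ((c₁+1)*(x:ℂ)^2+b₁*(x:ℂ))
      = Complex.exp (c₁*(x:ℂ)^2+b₁*(x:ℂ)) * Complex.exp ((x:ℂ)^2) := by
    rw [← Complex.exp_add]; congr 1; ring
  have E2 : Complex.exp ((c₂+1)*(x:ℂ)^2+b₂*(x:ℂ))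
      = Complex.exp (c₂*(x:ℂ)^2+b₂*(x:ℂ)) * Complex.exp ((x:ℂ)^2) := by
    rw [← Complex.exp_add]; congr 1; ring
  rw [E1, E2]
  linear_combination key - Complex.exp ((x:ℂ)^2) * hx


lemma gauss_memLp {b : ℝ} (hb : 0 < b) {r : ℝ≥0∞} (hr1 : 1 ≤ r) (hrt : r ≠ ∞) :
    MemLp (fun x : ℝ => Real.exp (-b*x^2)) r (volume : Measure ℝ) := by
  have hr0 : r ≠ 0 := (zero_lt_one.trans_le hr1).ne'
  have hrt' : 0 < r.toReal := ENNReal.toReal_pos hr0 hrt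
  have hcont : Continuous fun x : ℝ => Real.exp (-b*x^2) := by continuity
  rw [← memLp_norm_rpow_iff hcont.aestronglyMeasurable hr0 hrt, ENNReal.div_self hr0 hrt,
    memLp_one_iff_integrable]
  have heq : ∀ x : ℝ, Real.exp (-(b*r.toReal)*x^2) = ‖Real.exp (-b*x^2)‖ ^ r.toReal := by
    intro x
    rw [Real.norm_eq_abs, abs_of_pos (Real.exp_pos _), ← Real.exp_mul]
    congr 1; ring
  exact (integrable_exp_neg_mul_sq (mul_pos hb hrt')).congr
    (Eventually.of_forall heq)

lemma abs_le_exp_half_sq (t : ℝ) : |t| ≤ Real.exp (t^2/2) := by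
  nlinarith [Real.add_one_le_exp (t^2/2), sq_nonneg (|t|-1), sq_abs t, abs_nonneg t]

lemma exp_half_le_two : Real.exp (1/2 : ℝ) ≤ 2 := by
  have hsq : Real.exp (1/2 : ℝ) * Real.exp (1/2 : ℝ) = Real.exp 1 := by
    rw [← Real.exp_add]; norm_num
  nlinarith [Real.exp_pos (1/2 : ℝ), Real.exp_one_lt_d9]

lemma w_memLp {r : ℝ≥0∞} (hr1 : 1 ≤ r) (hrt : r ≠ ∞) :
    MemLp (fun x : ℝ => ((-2 * x * Real.exp (-x ^ 2) : ℝ) : ℂ)) r (volume : Measure ℝ) := by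
  have hg : MemLp (fun x : ℝ => 2*Real.exp (-(1/2:ℝ)*x^2)) r (volume : Measure ℝ) :=
    (gauss_memLp (by norm_num) hr1 hrt).const_mul 2
  refine MemLp.of_le hg ?_ (Eventually.of_forall fun x => ?_)
  · exact (Complex.continuous_ofReal.comp (by continuity)).aestronglyMeasurable
  · have h1 : |x| ≤ Real.exp (x^2/2) := abs_le_exp_half_sq x
    rw [Complex.norm_real, Real.norm_eq_abs, Real.norm_eq_abs,
      abs_of_pos (show (0:ℝ) < 2*Real.exp (-(1/2:ℝ)*x^2) by positivity)]
    have h2 : |(-2 * x * Real.exp (-x ^ 2) : ℝ)| = 2 * |x| * Real.exp (-x^2) := by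
      rw [abs_mul, abs_of_pos (Real.exp_pos _), abs_mul]
      norm_num
    rw [h2]
    have h4 : 2*Real.exp (x^2/2)*Real.exp (-x^2) = 2*Real.exp (-(1/2:ℝ)*x^2) := by
      rw [mul_assoc, ← Real.exp_add]; congr 2; ring
    have h3 : 2 * |x| * Real.exp (-x^2) ≤ 2*Real.exp (x^2/2)*Real.exp (-x^2) := by
      have := Real.exp_pos (-x^2)
      nlinarith
    linarith

lemma diffq_bound {c : ℝ} (hc : 1 ≤ c) (x : ℝ) :
    |(Real.exp (-(x+c⁻¹)^2) - Real.exp (-x^2))*c| ≤ 4*Real.exp (-(4⁻¹:ℝ)*x^2) := by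
  have hc0 : (0:ℝ) < c := zero_lt_one.trans_le hc
  set h : ℝ := c⁻¹ with hh
  have h0 : 0 < h := by positivity
  have h1 : h ≤ 1 := by rw [hh]; exact inv_le_one_of_one_le₀ hc
  set C : ℝ := 4*Real.exp (-(4⁻¹:ℝ)*x^2) with hC
  have hderiv : ∀ t ∈ Set.Icc x (x+h), HasDerivWithinAt (fun t : ℝ => Real.exp (-t^2))
      (Real.exp (-t^2) * (-2*t)) (Set.Icc x (x+h)) t := by
    intro t _
    have hinner : HasDerivAt (fun t : ℝ => -t^2) (-2*t) t := by
      have := (hasDerivAt_pow 2 t).neg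
      exact this.congr_deriv (by simp)
    exact (hinner.exp).hasDerivWithinAt
  have hbound : ∀ t ∈ Set.Ico x (x+h), ‖Real.exp (-t^2) * (-2*t)‖ ≤ C := by
    intro t ht
    have hs0 : 0 ≤ t - x := by linarith [ht.1]
    have hs1 : t - x ≤ 1 := by nlinarith [ht.2]
    have ht2 : x^2/2 - 1 ≤ t^2 := by nlinarith [sq_nonneg (x + 2*(t-x)), sq_nonneg (t-x)]
    have habs : |t| ≤ Real.exp (t^2/2) := abs_le_exp_half_sq t
    have e1 : Real.exp (-t^2) = Real.exp (-t^2/2) * Real.exp (-t^2/2) := by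
      rw [← Real.exp_add]; congr 1; ring
    have e2 : |t| * Real.exp (-t^2/2) ≤ 1 := by
      have hp := Real.exp_pos (-t^2/2)
      have : Real.exp (t^2/2) * Real.exp (-t^2/2) = 1 := by
        rw [← Real.exp_add, show t^2/2 + -t^2/2 = 0 from by ring, Real.exp_zero]
      nlinarith [abs_nonneg t]
    have e3 : Real.exp (-t^2/2) ≤ Real.exp (1/2) * Real.exp (-(4⁻¹:ℝ)*x^2) := by
      rw [← Real.exp_add]
      apply Real.exp_le_exp.mpr
      linarith
    have hnorm : ‖Real.exp (-t^2) * (-2*t)‖ = 2 * (|t| * Real.exp (-t^2/2)) * Real.exp (-t^2/2) := by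
      rw [Real.norm_eq_abs, abs_mul, abs_of_pos (Real.exp_pos _), e1,
        show |(-2*t)| = 2*|t| from by rw [abs_mul]; norm_num]
      ring
    rw [hnorm, hC]
    have hp2 : (0:ℝ) < Real.exp (-t^2/2) := Real.exp_pos _
    have hp3 : (0:ℝ) ≤ |t| * Real.exp (-t^2/2) := by positivity
    have hfin : 2 * (|t| * Real.exp (-t^2/2)) * Real.exp (-t^2/2) ≤ 2 * Real.exp (-t^2/2) := by
      nlinarith
    have hfin2 : 2 * Real.exp (-t^2/2) ≤ 2 * (Real.exp (1/2) * Real.exp (-(4⁻¹:ℝ)*x^2)) := by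
      nlinarith
    have hfin3 : 2 * (Real.exp (1/2) * Real.exp (-(4⁻¹:ℝ)*x^2)) ≤ 4*Real.exp (-(4⁻¹:ℝ)*x^2) := by
      have := exp_half_le_two
      nlinarith [Real.exp_pos (-(4⁻¹:ℝ)*x^2)]
    linarith
  have hmvt := norm_image_sub_le_of_norm_deriv_le_segment' hderiv hbound (x+h)
    (Set.right_mem_Icc.mpr (by linarith))
  rw [Real.norm_eq_abs] at hmvt
  -- hmvt : |exp(-(x+h)^2) - exp(-x^2)| ≤ C * (x + h - x)
  have habs2 : |(Real.exp (-(x+h)^2) - Real.exp (-x^2))*c| ≤ C * h * c := by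
    rw [abs_mul, abs_of_pos hc0]
    have : C * (x + h - x) = C * h := by ring
    rw [this] at hmvt
    exact mul_le_mul_of_nonneg_right hmvt (le_of_lt hc0)
  have : C * h * c = C := by
    rw [hh]
    field_simp
  rw [this] at habs2
  exact habs2

lemma basic_gauss_mem (aR qR : ℝ) :
    (fun x : ℝ => (aR:ℂ) * Complex.exp (-((x:ℂ) - (qR:ℂ))^2)) ∈ GaussianPacket1D := by
  refine ⟨(aR:ℂ), 0, qR, 2, 0, by norm_num, fun x => ?_⟩
  simp

noncomputable def wfun : ℝ → ℂ := fun x : ℝ => ((-2 * x * Real.exp (-x ^ 2) : ℝ) : ℂ)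

noncomputable def gseq : ℕ → ℝ → ℂ := fun k x =>
  (((Real.exp (-(x+((k:ℝ)+1)⁻¹)^2) - Real.exp (-x^2)) * ((k:ℝ)+1) : ℝ) : ℂ)

lemma part1' : wfun ∉ TwoGaussianSums := part1

lemma part2 : ∀ r r' : ℝ≥0∞, 1 ≤ r → r ≠ ∞ → r⁻¹ + r'⁻¹ = 1 →
    ¬ (∀ (g : ℕ → ℝ → ℂ) (g' : ℝ → ℂ),
        (∀ k, g k ∈ TwoGaussianSums) →
        MemLp g' r (volume : Measure ℝ) →
        (∀ φ : ℝ → ℂ, MemLp φ r' (volume : Measure ℝ) →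
          Tendsto (fun k => ∫ x : ℝ, g k x * φ x) atTop
            (nhds (∫ x : ℝ, g' x * φ x))) →
        ∃ h ∈ TwoGaussianSums, g' =ᵐ[(volume : Measure ℝ)] h) := by
  intro r r' hr1 hrt hconj Hyp
  have hk1 : ∀ k : ℕ, (1:ℝ) ≤ (k:ℝ)+1 := fun k => by
    have : (0:ℝ) ≤ (k:ℝ) := Nat.cast_nonneg k
    linarith
  have claimA : ∀ k, gseq k ∈ TwoGaussianSums := by
    intro k
    refine ⟨fun x : ℝ => ((((k:ℝ)+1 : ℝ)):ℂ) * Complex.exp (-((x:ℂ) - ((-(((k:ℝ)+1)⁻¹) : ℝ):ℂ))^2),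
      basic_gauss_mem _ _,
      fun x : ℝ => (((-((k:ℝ)+1) : ℝ)):ℂ) * Complex.exp (-((x:ℂ) - ((0:ℝ):ℂ))^2),
      basic_gauss_mem _ _, funext fun x => ?_⟩
    show gseq k x = _ + _
    unfold gseq
    simp only [Pi.add_apply]
    push_cast [Complex.ofReal_exp]
    ring_nf
  have claimB : MemLp wfun r (volume : Measure ℝ) := w_memLp hr1 hrt
  have claimC : ∀ φ : ℝ → ℂ, MemLp φ r' (volume : Measure ℝ) →
      Tendsto (fun k => ∫ x : ℝ, gseq k x * φ x) atTop (nhds (∫ x : ℝ, wfun x * φ x)) := by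
    intro φ hφ
    have hgcont : ∀ k, Continuous (gseq k) := fun k => by
      unfold gseq
      exact Complex.continuous_ofReal.comp (by fun_prop)
    apply tendsto_integral_of_dominated_convergence
      (fun x => ‖φ x‖ * (4*Real.exp (-(4⁻¹:ℝ)*x^2)))
    · exact fun k => ((hgcont k).aestronglyMeasurable.mul hφ.aestronglyMeasurable)
    · have hg4 : MemLp (fun x : ℝ => 4*Real.exp (-(4⁻¹:ℝ)*x^2)) r (volume : Measure ℝ) :=
        (gauss_memLp (by norm_num) hr1 hrt).const_mul 4
      have hφn : MemLp (fun x => ‖φ x‖) r' (volume : Measure ℝ) := hφ.norm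
      have hpqr : (1:ℝ≥0∞)/1 = 1/r' + 1/r := by
        simp only [one_div, inv_one]
        rw [add_comm]; exact hconj.symm
      have hint := hg4.smul hφn (r := 1) (hpqr := ⟨by simpa only [one_div, inv_one] using hpqr.symm⟩)
      rw [memLp_one_iff_integrable] at hint
      exact hint
    · intro k
      refine Eventually.of_forall fun x => ?_
      rw [norm_mul, mul_comm]
      refine mul_le_mul_of_nonneg_left ?_ (norm_nonneg _)
      have hnorm : ‖gseq k x‖
          = |(Real.exp (-(x+((k:ℝ)+1)⁻¹)^2) - Real.exp (-x^2)) * ((k:ℝ)+1)| := by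
        unfold gseq
        rw [Complex.norm_real, Real.norm_eq_abs]
      rw [hnorm]
      exact diffq_bound (hk1 k) x
    · refine Eventually.of_forall fun x => ?_
      have hder : HasDerivAt (fun t : ℝ => Real.exp (-(x+t)^2)) (-2*x*Real.exp (-x^2)) 0 := by
        have h1 : HasDerivAt (fun t : ℝ => x+t) 1 0 := (hasDerivAt_id 0).const_add x
        have hin : HasDerivAt (fun t : ℝ => -(x+t)^2) (-2*x) 0 := by
          have h2 := (h1.pow 2).neg
          exact h2.congr_deriv (by simp)
        have h3 := hin.exp
        convert h3 using 1
        rw [add_zero]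
        ring
      rw [hasDerivAt_iff_tendsto_slope] at hder
      have hseq : Tendsto (fun k : ℕ => ((k:ℝ)+1)⁻¹) atTop (nhdsWithin (0:ℝ) {(0:ℝ)}ᶜ) := by
        have h1 : Tendsto (fun k : ℕ => ((k:ℝ)+1)⁻¹) atTop (nhds 0) := by
          simpa only [one_div] using tendsto_one_div_add_atTop_nhds_zero_nat (𝕜 := ℝ)
        refine tendsto_nhdsWithin_of_tendsto_nhds_of_eventually_within _ h1
          (Eventually.of_forall fun k => ?_)
        simp only [Set.mem_compl_iff, Set.mem_singleton_iff]
        have : (0:ℝ) < ((k:ℝ)+1)⁻¹ := by positivity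
        exact this.ne'
      have hcomp := hder.comp hseq
      have heq : (slope (fun t : ℝ => Real.exp (-(x+t)^2)) 0) ∘ (fun k : ℕ => ((k:ℝ)+1)⁻¹)
          = fun k : ℕ => (Real.exp (-(x+((k:ℝ)+1)⁻¹)^2) - Real.exp (-x^2)) * ((k:ℝ)+1) := by
        funext k
        simp only [Function.comp_apply]
        rw [slope_def_field, sub_zero, div_eq_mul_inv, inv_inv, add_zero]
      rw [heq] at hcomp
      have hC := (Complex.continuous_ofReal.tendsto _).comp hcomp
      exact hC.mul_const (φ x)
  obtain ⟨h, hmem, hae⟩ := Hyp gseq wfun claimA claimB claimC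
  obtain ⟨p1c, hp1, p2c, hp2, heq⟩ := hmem
  have hc1 : Continuous p1c := by
    obtain ⟨A, c, b, hf⟩ := packet_form hp1
    rw [show p1c = fun x : ℝ => A * Complex.exp (c*(x:ℂ)^2 + b*(x:ℂ)) from funext hf]
    exact continuous_const.mul (Complex.continuous_exp.comp
      ((continuous_const.mul (Complex.continuous_ofReal.pow 2)).add
        (continuous_const.mul Complex.continuous_ofReal)))
  have hc2 : Continuous p2c := by
    obtain ⟨A, c, b, hf⟩ := packet_form hp2
    rw [show p2c = fun x : ℝ => A * Complex.exp (c*(x:ℂ)^2 + b*(x:ℂ)) from funext hf]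
    exact continuous_const.mul (Complex.continuous_exp.comp
      ((continuous_const.mul (Complex.continuous_ofReal.pow 2)).add
        (continuous_const.mul Complex.continuous_ofReal)))
  have hch : Continuous h := by rw [heq]; exact hc1.add hc2
  have hwc : Continuous wfun := by
    unfold wfun
    exact Complex.continuous_ofReal.comp (by fun_prop)
  have hweq : wfun = h := (Continuous.ae_eq_iff_eq volume hwc hch).mp hae
  exact part1' (by rw [hweq]; exact ⟨p1c, hp1, p2c, hp2, heq⟩)

/-- The function `w(x) = −2x e^{−x²}` is not the sum of two Gaussian
wave packets; consequently `𝒢 + 𝒢` is not weakly sequentially closed in `L^r(ℝ)` for any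
`1 ≤ r < ∞`. -/
theorem two_gaussian_sums_not_weakly_closed :
    ((fun x : ℝ => ((-2 * x * Real.exp (-x ^ 2) : ℝ) : ℂ)) ∉ TwoGaussianSums) ∧
    (∀ r r' : ℝ≥0∞, 1 ≤ r → r ≠ ∞ → r⁻¹ + r'⁻¹ = 1 →
      ¬ (∀ (g : ℕ → ℝ → ℂ) (g' : ℝ → ℂ),
          (∀ k, g k ∈ TwoGaussianSums) →
          MemLp g' r (volume : Measure ℝ) →
          (∀ φ : ℝ → ℂ, MemLp φ r' (volume : Measure ℝ) →
            Tendsto (fun k => ∫ x : ℝ, g k x * φ x) atTop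
              (nhds (∫ x : ℝ, g' x * φ x))) →
          ∃ h ∈ TwoGaussianSums, g' =ᵐ[(volume : Measure ℝ)] h)) :=
  ⟨part1, part2⟩
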